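/- Let G be a finite simple graph of class two and let C be a minimum vertex cover of G. Then for every nonempty independent set A ⊆ C one has |N_{V−C}(A)| > 2|A|. -/

import Mathlib

open Finset

/-- `C` is a vertex cover of `G`: every edge has an endpoint in `C`. -/
def IsCover {V : Type*} (G : SimpleGraph V) (C : Finset V) : Prop :=
  ∀ ⦃u v : V⦄, G.Adj u v → u ∈ C ∨ v ∈ C

/-- `A` is an independent set of `G`: no two of its vertices are adjacent. -/
def IsIndep {V : Type*} (G : SimpleGraph V) (A : Finset V) : Prop :=
  ∀ ⦃u : V⦄, u ∈ A → ∀ ⦃v : V⦄, v ∈ A → ¬ G.Adj u v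

/-- The vertex cover number β(G): the minimum size of a vertex cover of `G`. -/
noncomputable def coverNumber {V : Type*} [Fintype V] (G : SimpleGraph V) : ℕ :=
  sInf {n : ℕ | ∃ C : Finset V, IsCover G C ∧ C.card = n}

/-- `G` admits a feasible schedule for a boat of capacity `b`, in the sense of the
structure theorem of Csorba, Hurkens and Woeginger. -/
def Feasible {V : Type*} [Fintype V] [DecidableEq V] (G : SimpleGraph V) (b : ℕ) : Prop :=
  ∃ X₁ X₂ X₃ Y₁ Y₂ : Finset V,
    Disjoint X₁ X₂ ∧ Disjoint X₁ X₃ ∧ Disjoint X₂ X₃ ∧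
    IsIndep G (X₁ ∪ X₂ ∪ X₃) ∧
    Y₁.Nonempty ∧ Y₂.Nonempty ∧
    Y₁ ⊆ Finset.univ \ (X₁ ∪ X₂ ∪ X₃) ∧ Y₂ ⊆ Finset.univ \ (X₁ ∪ X₂ ∪ X₃) ∧
    (Finset.univ \ (X₁ ∪ X₂ ∪ X₃)).card ≤ b ∧
    IsIndep G (X₁ ∪ Y₁) ∧ IsIndep G (X₂ ∪ Y₂) ∧
    X₃.card ≤ Y₁.card + Y₂.card

/-- `G` is of class one if it has a feasible schedule for boat capacity β(G). -/
def ClassOne {V : Type*} [Fintype V] [DecidableEq V] (G : SimpleGraph V) : Prop :=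
  Feasible G (coverNumber G)

/-- `G` is of class two if it is not of class one. -/
def ClassTwo {V : Type*} [Fintype V] [DecidableEq V] (G : SimpleGraph V) : Prop :=
  ¬ ClassOne G

/-- `extNbr G C S` is N_{V−C}(S): the set of vertices outside `C` that are adjacent to
at least one vertex of `S`. -/
def extNbr {V : Type*} [Fintype V] [DecidableEq V] (G : SimpleGraph V) [DecidableRel G.Adj]
    (C S : Finset V) : Finset V :=
  Finset.univ.filter (fun v => v ∉ C ∧ ∃ s ∈ S, G.Adj s v)

/-!
If some nonempty independent `A ⊆ C` had `|N_{V−C}(A)| ≤ 2|A|`, then `G` would be of class one: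
leave the independent set `V − C − N_{V−C}(A)` on the bank as `X₁` (it sees no vertex of `A`), put
`X₃ = N_{V−C}(A)`, and let both boat loads be `Y₁ = Y₂ = A`, so `|X₃| ≤ |Y₁| + |Y₂|` and `Y = C`
has size `β(G)`.
-/

section

variable {V : Type*} {G : SimpleGraph V}

theorem IsIndep.mono {S T : Finset V} (hT : IsIndep G T) (hST : S ⊆ T) : IsIndep G S :=
  fun _ hu _ hv => hT (hST hu) (hST hv)

theorem IsIndep.union [DecidableEq V] {S T : Finset V} (hS : IsIndep G S) (hT : IsIndep G T)
    (hST : ∀ u ∈ S, ∀ v ∈ T, ¬ G.Adj u v) : IsIndep G (S ∪ T) := by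
  intro u hu v hv hadj
  rcases mem_union.1 hu with hu | hu <;> rcases mem_union.1 hv with hv | hv
  · exact hS hu hv hadj
  · exact hST u hu v hv hadj
  · exact hST v hv u hu hadj.symm
  · exact hT hu hv hadj

variable [Fintype V] [DecidableEq V]

theorem IsCover.isIndep_compl {C : Finset V} (hC : IsCover G C) : IsIndep G (univ \ C) := by
  intro u hu v hv hadj
  rcases hC hadj with h | h
  · exact (mem_sdiff.1 hu).2 h
  · exact (mem_sdiff.1 hv).2 h

variable [DecidableRel G.Adj]

@[simp]
theorem mem_extNbr {C S : Finset V} {v : V} :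
    v ∈ extNbr G C S ↔ v ∉ C ∧ ∃ s ∈ S, G.Adj s v := by
  simp [extNbr]

theorem extNbr_subset_compl (C S : Finset V) : extNbr G C S ⊆ univ \ C := fun v hv => by
  simpa using (mem_extNbr.1 hv).1

theorem feasible_card_of_card_extNbr_le {C A : Finset V} (hC : IsCover G C) (hAC : A ⊆ C)
    (hA : A.Nonempty) (hInd : IsIndep G A) (hle : (extNbr G C A).card ≤ 2 * A.card) :
    Feasible G C.card := by
  set N := extNbr G C A
  have hX : (univ \ C) \ N ∪ ∅ ∪ N = univ \ C := by
    rw [union_empty, sdiff_union_of_subset (extNbr_subset_compl C A)]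
  have hY : univ \ (univ \ C) = C := by
    rw [sdiff_sdiff_self_left, univ_inter]
  have hX₁ : IsIndep G ((univ \ C) \ N ∪ A) := by
    refine (hC.isIndep_compl.mono sdiff_subset).union hInd fun u hu v hv hadj => ?_
    obtain ⟨huC, huN⟩ := mem_sdiff.1 hu
    exact huN (mem_extNbr.2 ⟨(mem_sdiff.1 huC).2, v, hv, hadj.symm⟩)
  refine ⟨(univ \ C) \ N, ∅, N, A, A, disjoint_empty_right _, sdiff_disjoint,
    disjoint_empty_left _, ?_, hA, hA, ?_, ?_, ?_, hX₁, ?_, ?_⟩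
  · rw [hX]; exact hC.isIndep_compl
  · rw [hX, hY]; exact hAC
  · rw [hX, hY]; exact hAC
  · rw [hX, hY]
  · rwa [empty_union]
  · omega

end

/-- If `G` is of class two and `C` is a minimum vertex cover, then every nonempty
independent set `A ⊆ C` satisfies `|N_{V−C}(A)| > 2|A|`. -/
theorem two_mul_card_lt_card_extNbr_of_classTwo {V : Type*} [Fintype V] [DecidableEq V]
    (G : SimpleGraph V) [DecidableRel G.Adj] (C : Finset V)
    (hC : IsCover G C) (hmin : C.card = coverNumber G) (h2 : ClassTwo G) :
    ∀ A ⊆ C, A.Nonempty → IsIndep G A → 2 * A.card < (extNbr G C A).card := by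
  intro A hAC hA hInd
  by_contra! hle
  apply h2
  rw [ClassOne, ← hmin]
  exact feasible_card_of_card_extNbr_le hC hAC hA hInd hle
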